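/- The inner offset of a Lipschitz graph is Lipschitz with the same constant: let φ : ℝ^{d-1} → [0,∞) be Lipschitz with constant L, Φ(x̄) = (φ(x̄), x̄), and define ψ(x̄) = min{ t ∈ ℝ : dist((t, x̄), Φ(ℝ^{d-1})) = δ and t < φ(x̄) }. Then ψ is well-defined on ℝ^{d-1} and Lipschitz with constant L (independent of δ). -/

import Mathlib

open MeasureTheory Real Set Filter

noncomputable section

/-- Surface area of the unit `(d-1)`-sphere in `ℝ^d`. -/
def sphereArea (d : ℕ) : ℝ :=
  d * (volume (Metric.ball (0 : EuclideanSpace ℝ (Fin d)) 1)).toReal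

/-- The rescaled nonlocal kernel `γ_δ^β(r) = C_{d,p,β} δ^{-(d+p-β)} r^{-β} 1_{r<δ}`
with `C_{d,p,β} = (d+p-β)/s_{d-1}`. -/
def nlKernel (d : ℕ) (p β δ r : ℝ) : ℝ :=
  if r < δ then (((d : ℝ) + p - β) / (sphereArea d * δ ^ ((d : ℝ) + p - β))) * r ^ (-β) else 0

/-- The (p-th power of the) nonlocal seminorm `|u|^p_{S_δ^β(U)}`. -/
def Ssem (d : ℕ) (p β δ : ℝ) (U : Set (EuclideanSpace ℝ (Fin d)))
    (u : EuclideanSpace ℝ (Fin d) → ℝ) : ℝ :=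
  ∫ x in U, ∫ y in U, nlKernel d p β δ (dist y x) * |u y - u x| ^ p

/-- The (p-th power of the) nonlocal trace seminorm `|u|^p_{T_δ^β(Ω)}`. -/
def Tsem (d : ℕ) (p β δ : ℝ) (Ω : Set (EuclideanSpace ℝ (Fin d)))
    (u : EuclideanSpace ℝ (Fin d) → ℝ) : ℝ :=
  δ ^ (β - 2) * ∫ x in Ω, ∫ y in Ω,
    |u y - u x| ^ p / ((max (dist y x) δ) ^ ((d : ℝ) + p - 2) * (min (dist y x) δ) ^ β)

/-- The p-th power of the `L^p` norm of `u` over `U`. -/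
def LpPow (d : ℕ) (p : ℝ) (U : Set (EuclideanSpace ℝ (Fin d)))
    (u : EuclideanSpace ℝ (Fin d) → ℝ) : ℝ :=
  ∫ x in U, |u x| ^ p

/-- The stripe `(a,b) × ℝ^{d-1}`. -/
def stripe (d : ℕ) (hd : 0 < d) (a b : ℝ) : Set (EuclideanSpace ℝ (Fin d)) :=
  {x | a < x ⟨0, hd⟩ ∧ x ⟨0, hd⟩ < b}

/-- The half space `(a,∞) × ℝ^{d-1}`. -/
def stripeInf (d : ℕ) (hd : 0 < d) (a : ℝ) : Set (EuclideanSpace ℝ (Fin d)) :=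
  {x | a < x ⟨0, hd⟩}

/-- The point `(t, xb) ∈ ℝ × ℝ^{d-1} = ℝ^d`. -/
def mkPt (n : ℕ) (t : ℝ) (xb : EuclideanSpace ℝ (Fin n)) :
    EuclideanSpace ℝ (Fin (n + 1)) :=
  WithLp.toLp 2 (Fin.cons t (WithLp.ofLp xb) : Fin (n + 1) → ℝ)

/-- The tangential part `xb` of a point `x = (t, xb) ∈ ℝ^d`. -/
def tailPt (n : ℕ) (x : EuclideanSpace ℝ (Fin (n + 1))) : EuclideanSpace ℝ (Fin n) :=
  WithLp.toLp 2 (fun j : Fin n => x j.succ)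

/-- The graph `Φ(ℝ^{d-1}) = {(φ(xb), xb)} ⊂ ℝ^d` of `φ`. -/
def graphSet (n : ℕ) (φ : EuclideanSpace ℝ (Fin n) → ℝ) :
    Set (EuclideanSpace ℝ (Fin (n + 1))) :=
  {z | ∃ xb, z = mkPt n (φ xb) xb}

/-- The admissible offset levels at `xb`:
`{t : dist((t,xb), Φ(ℝ^{d-1})) = δ and t < φ(xb)}`. -/
def offsetLevels (n : ℕ) (φ : EuclideanSpace ℝ (Fin n) → ℝ) (δ : ℝ)
    (xb : EuclideanSpace ℝ (Fin n)) : Set ℝ :=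
  {t | Metric.infDist (mkPt n t xb) (graphSet n φ) = δ ∧ t < φ xb}

/-- The inner `δ`-offset `ψ` of the Lipschitz graph of `φ`, defined as the minimal
admissible offset level. -/
def psiOff (n : ℕ) (φ : EuclideanSpace ℝ (Fin n) → ℝ) (δ : ℝ)
    (xb : EuclideanSpace ℝ (Fin n)) : ℝ :=
  sInf (offsetLevels n φ δ xb)

/-- The fiber-wise collar straightening map sending
`x = (t, xb) ∈ (-δ,0) × ℝ^{d-1}` to `x' = ((1+t/δ)φ(xb) - (t/δ)ψ(xb), xb)`. -/
def collarMap (n : ℕ) (φ ψ : EuclideanSpace ℝ (Fin n) → ℝ) (δ : ℝ)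
    (x : EuclideanSpace ℝ (Fin (n + 1))) : EuclideanSpace ℝ (Fin (n + 1)) :=
  mkPt n ((1 + x 0 / δ) * φ (tailPt n x) - (x 0 / δ) * ψ (tailPt n x)) (tailPt n x)

/-!
For fixed `xb`, the function `t ↦ dist((t, xb), Φ)` is continuous, vanishes at `t = φ xb` and,
since `φ ≥ 0`, is at least `-t`. Hence the admissible levels form a nonempty closed set bounded
below by `-δ`, so `ψ xb` is attained; and by the intermediate value theorem, `ψ xb ≤ t` whenever
`dist((t, xb), Φ) ≤ δ`. For the Lipschitz bound, take a nearest graph point of `(ψ yb, yb)`,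
shift it horizontally by `xb - yb`, and shift the level by as much as the graph moves: the
distance stays `δ`, and the new level is at most `ψ yb + L |xb - yb|`.
-/

section

variable {n : ℕ} {φ : EuclideanSpace ℝ (Fin n) → ℝ} {δ : ℝ} {L : NNReal}

lemma dist_mkPt (t s : ℝ) (xb yb : EuclideanSpace ℝ (Fin n)) :
    dist (mkPt n t xb) (mkPt n s yb) = √((t - s) ^ 2 + dist xb yb ^ 2) := by
  rw [EuclideanSpace.dist_eq, Fin.sum_univ_succ, EuclideanSpace.dist_eq,
    Real.sq_sqrt (by positivity), Real.dist_eq, sq_abs]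
  rfl

lemma abs_sub_le_dist_mkPt (t s : ℝ) (xb yb : EuclideanSpace ℝ (Fin n)) :
    |t - s| ≤ dist (mkPt n t xb) (mkPt n s yb) := by
  rw [dist_mkPt, ← Real.sqrt_sq_eq_abs]
  exact Real.sqrt_le_sqrt (le_add_of_nonneg_right (by positivity))

lemma isometry_mkPt_left (xb : EuclideanSpace ℝ (Fin n)) :
    Isometry fun t => mkPt n t xb :=
  Isometry.of_dist_eq fun t s => by
    rw [dist_mkPt, dist_self, Real.dist_eq, ← Real.sqrt_sq_eq_abs]
    ring_nf

lemma lipschitzWith_tailPt (n : ℕ) : LipschitzWith 1 (tailPt n) :=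
  LipschitzWith.of_dist_le_mul fun x y => by
    rw [NNReal.coe_one, one_mul, EuclideanSpace.dist_eq, EuclideanSpace.dist_eq,
      Fin.sum_univ_succ]
    exact Real.sqrt_le_sqrt (le_add_of_nonneg_left (by positivity))

lemma graphSet_eq :
    graphSet n φ = {z | z 0 = φ (tailPt n z)} := by
  ext z
  constructor
  · rintro ⟨xb, rfl⟩
    rfl
  · intro hz
    refine ⟨tailPt n z, ?_⟩
    ext i
    cases i using Fin.cases
    exacts [hz, rfl]

lemma isClosed_graphSet (hφ : Continuous φ) :
    IsClosed (graphSet n φ) := by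
  rw [graphSet_eq]
  exact isClosed_eq (EuclideanSpace.proj 0).continuous
    (hφ.comp (lipschitzWith_tailPt n).continuous)

lemma graphSet_nonempty :
    (graphSet n φ).Nonempty :=
  ⟨_, 0, rfl⟩

lemma continuous_infDist_mkPt_graphSet (xb : EuclideanSpace ℝ (Fin n)) :
    Continuous fun t => Metric.infDist (mkPt n t xb) (graphSet n φ) :=
  (Metric.continuous_infDist_pt _).comp (isometry_mkPt_left xb).continuous

lemma infDist_mkPt_graphSet_self (xb : EuclideanSpace ℝ (Fin n)) :
    Metric.infDist (mkPt n (φ xb) xb) (graphSet n φ) = 0 :=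
  Metric.infDist_zero_of_mem ⟨xb, rfl⟩

lemma neg_le_infDist_mkPt_graphSet (hφ0 : ∀ xb, 0 ≤ φ xb) (t : ℝ) (xb : EuclideanSpace ℝ (Fin n)) :
    -t ≤ Metric.infDist (mkPt n t xb) (graphSet n φ) := by
  refine (Metric.le_infDist graphSet_nonempty).2 ?_
  rintro _ ⟨zb, rfl⟩
  calc -t ≤ |t - φ zb| := by rw [abs_sub_comm]; linarith [le_abs_self (φ zb - t), hφ0 zb]
    _ ≤ _ := abs_sub_le_dist_mkPt _ _ _ _

lemma offsetLevels_eq (hδ : δ ≠ 0) (xb : EuclideanSpace ℝ (Fin n)) :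
    offsetLevels n φ δ xb
      = (fun t => Metric.infDist (mkPt n t xb) (graphSet n φ)) ⁻¹' {δ} ∩ Iic (φ xb) := by
  ext t
  refine ⟨fun ht => ⟨ht.1, ht.2.le⟩, fun ⟨ht, htφ⟩ => ⟨ht, htφ.lt_of_ne ?_⟩⟩
  rintro rfl
  exact hδ ((Set.mem_singleton_iff.1 ht).symm.trans (infDist_mkPt_graphSet_self xb))

/-- Far below the graph the distance exceeds `δ`, so the intermediate value theorem applies. -/
lemma exists_mem_offsetLevels_le (hδ : 0 < δ) (hφ0 : ∀ xb, 0 ≤ φ xb)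
    {xb : EuclideanSpace ℝ (Fin n)} {t : ℝ} (htφ : t ≤ φ xb)
    (ht : Metric.infDist (mkPt n t xb) (graphSet n φ) ≤ δ) :
    ∃ u ∈ offsetLevels n φ δ xb, u ≤ t := by
  have hlow : δ ≤ Metric.infDist (mkPt n (min t (-δ)) xb) (graphSet n φ) :=
    (le_neg.1 (min_le_right t (-δ))).trans (neg_le_infDist_mkPt_graphSet hφ0 _ xb)
  obtain ⟨u, ⟨-, hut⟩, hu⟩ := intermediate_value_Icc' (min_le_left t (-δ))
    (continuous_infDist_mkPt_graphSet xb).continuousOn ⟨ht, hlow⟩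
  refine ⟨u, ?_, hut⟩
  rw [offsetLevels_eq hδ.ne']
  exact ⟨hu, hut.trans htφ⟩

lemma isLeast_psiOff (hδ : 0 < δ) (hφ0 : ∀ xb, 0 ≤ φ xb)
    (xb : EuclideanSpace ℝ (Fin n)) :
    IsLeast (offsetLevels n φ δ xb) (psiOff n φ δ xb) := by
  have hbdd : BddBelow (offsetLevels n φ δ xb) :=
    ⟨-δ, fun t ht => by linarith [ht.1 ▸ neg_le_infDist_mkPt_graphSet hφ0 t xb]⟩
  obtain ⟨u, hu, -⟩ := exists_mem_offsetLevels_le hδ hφ0 le_rfl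
    (infDist_mkPt_graphSet_self xb ▸ hδ.le)
  have hclosed : IsClosed (offsetLevels n φ δ xb) := by
    rw [offsetLevels_eq hδ.ne']
    exact (isClosed_singleton.preimage (continuous_infDist_mkPt_graphSet xb)).inter
      isClosed_Iic
  exact ⟨hclosed.csInf_mem ⟨u, hu⟩ hbdd, fun _ ht => csInf_le hbdd ht⟩

lemma psiOff_le_of_infDist_le (hδ : 0 < δ) (hφ0 : ∀ xb, 0 ≤ φ xb)
    {xb : EuclideanSpace ℝ (Fin n)} {t : ℝ}
    (ht : Metric.infDist (mkPt n t xb) (graphSet n φ) ≤ δ) :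
    psiOff n φ δ xb ≤ t := by
  have hψ := isLeast_psiOff hδ hφ0 xb
  rcases le_or_gt t (φ xb) with htφ | hφt
  · obtain ⟨u, hu, hut⟩ := exists_mem_offsetLevels_le hδ hφ0 htφ ht
    exact (hψ.2 hu).trans hut
  · exact hψ.1.2.le.trans hφt.le

lemma exists_le_add_infDist_mkPt_graphSet_le (hφ : LipschitzWith L φ) (a : ℝ)
    (xb yb : EuclideanSpace ℝ (Fin n)) :
    ∃ s ≤ a + L * dist xb yb, Metric.infDist (mkPt n s xb) (graphSet n φ)
      ≤ Metric.infDist (mkPt n a yb) (graphSet n φ) := by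
  obtain ⟨_, ⟨zb, rfl⟩, hz⟩ := (isClosed_graphSet hφ.continuous).exists_infDist_eq_dist
    graphSet_nonempty (mkPt n a yb)
  set wb := zb + (xb - yb)
  have hrise : φ wb - φ zb ≤ L * dist xb yb := by
    have := hφ.dist_le_mul wb zb
    rw [dist_self_add_left, ← dist_eq_norm, Real.dist_eq] at this
    exact (le_abs_self _).trans this
  refine ⟨a + (φ wb - φ zb), by linarith, ?_⟩
  rw [hz]
  have hw : mkPt n (φ wb) wb ∈ graphSet n φ := ⟨wb, rfl⟩
  refine (Metric.infDist_le_dist_of_mem hw).trans_eq ?_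
  rw [dist_mkPt, dist_mkPt]
  congr 3
  · ring
  · simp only [wb, dist_eq_norm]; congr 1; abel

lemma psiOff_le_add (hδ : 0 < δ) (hφ0 : ∀ xb, 0 ≤ φ xb) (hφ : LipschitzWith L φ)
    (xb yb : EuclideanSpace ℝ (Fin n)) :
    psiOff n φ δ xb ≤ psiOff n φ δ yb + L * dist xb yb := by
  obtain ⟨s, hs, hsδ⟩ := exists_le_add_infDist_mkPt_graphSet_le hφ (psiOff n φ δ yb) xb yb
  rw [(isLeast_psiOff hδ hφ0 yb).1.1] at hsδ
  exact (psiOff_le_of_infDist_le hδ hφ0 hsδ).trans hs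
end

theorem psiOff_isLeast_and_lipschitz_general (n : ℕ) (δ : ℝ) (hδ : 0 < δ)
    (L : NNReal) (φ : EuclideanSpace ℝ (Fin n) → ℝ)
    (hφ0 : ∀ xb, 0 ≤ φ xb) (hφ : LipschitzWith L φ) :
    (∀ xb, IsLeast (offsetLevels n φ δ xb) (psiOff n φ δ xb))
    ∧ LipschitzWith L (psiOff n φ δ) :=
  ⟨isLeast_psiOff hδ hφ0, LipschitzWith.of_le_add_mul L (psiOff_le_add hδ hφ0 hφ)⟩

/-- the inner `δ`-offset of a Lipschitz graph is well defined and
Lipschitz with the same constant, independent of `δ`. -/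
theorem psiOff_isLeast_and_lipschitz (n : ℕ) (hn : 1 ≤ n) (δ : ℝ) (hδ : 0 < δ)
    (L : NNReal) (φ : EuclideanSpace ℝ (Fin n) → ℝ)
    (hφ0 : ∀ xb, 0 ≤ φ xb) (hφ : LipschitzWith L φ) :
    (∀ xb, IsLeast (offsetLevels n φ δ xb) (psiOff n φ δ xb))
    ∧ LipschitzWith L (psiOff n φ δ) :=
  psiOff_isLeast_and_lipschitz_general n δ hδ L φ hφ0 hφ
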